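/- arXiv:2105.07514 — 2 statements merged into one kernel-verified Lean document; each statement's English description precedes it below -/
import Mathlib

section
/- Permutation p-value validity: let G be a finite group acting on a sample space, T a real statistic, and suppose the data X has a G-invariant distribution (X and g·X have the same law for all g ∈ G). Define the permutation p-value p(X) = (1/|G|) · |{g ∈ G : T(g·X) ≥ T(X)}|. Then for every t ∈ [0,1], P(p(X) ≤ t) ≤ t. -/
open MeasureTheory
open scoped Classical
open scoped ENNReal

/-!
Put `f g = T (g • x)`. Reindexing by right multiplication, `p (g • x) · |G|` is the number of
`h` with `f g ≤ f h`; the `g` with `p (g • x) ≤ t` all lie above the one among them minimizing `f`,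
so there are at most `t |G|` of them, for every `x`. Averaging this over `x ∼ X`, and using that
`g • X` has the law of `X`, gives `|G| · P(p(X) ≤ t) ≤ t |G|`.
-/

open Finset

theorem card_filter_card_filter_le_le {ι α : Type*} [Fintype ι] [LinearOrder α] (f : ι → α)
    {k : ℝ} (hk : 0 ≤ k) : (#{i | (#{j | f i ≤ f j} : ℝ) ≤ k} : ℝ) ≤ k := by
  set S : Finset ι := {i | (#{j | f i ≤ f j} : ℝ) ≤ k}
  obtain hS | hS := S.eq_empty_or_nonempty
  · simpa [hS] using hk
  obtain ⟨i₀, hi₀, hmin⟩ := S.exists_min_image f hS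
  have hsub : S ⊆ ({j | f i₀ ≤ f j} : Finset ι) := fun i hi => by simpa using hmin i hi
  calc (#S : ℝ) ≤ #{j | f i₀ ≤ f j} := by exact_mod_cast card_le_card hsub
    _ ≤ k := (mem_filter.mp hi₀).2

theorem MeasureTheory.sum_measure_le_of_forall_card_le {α ι : Type*} [MeasurableSpace α]
    {μ : Measure α} (s : Finset ι) {A : ι → Set α} (hA : ∀ i ∈ s, NullMeasurableSet (A i) μ)
    {c : ℝ≥0∞} (hc : ∀ x, (#{i ∈ s | x ∈ A i} : ℝ≥0∞) ≤ c) :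
    ∑ i ∈ s, μ (A i) ≤ c * μ Set.univ := by
  calc ∑ i ∈ s, μ (A i) = ∑ i ∈ s, ∫⁻ x, (A i).indicator 1 x ∂μ :=
        sum_congr rfl fun i hi => (lintegral_indicator_one₀ (hA i hi)).symm
    _ = ∫⁻ x, (#{i ∈ s | x ∈ A i} : ℝ≥0∞) ∂μ := by
        rw [← lintegral_finsetSum' (f := fun i => (A i).indicator 1) s
          fun i hi => (aemeasurable_indicator_const_iff 1).mpr (hA i hi)]
        refine lintegral_congr fun x => ?_
        simp only [Set.indicator_apply, Pi.one_apply, natCast_card_filter]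
    _ ≤ ∫⁻ _, c ∂μ := lintegral_mono hc
    _ = c * μ Set.univ := lintegral_const c

noncomputable def permPValue (G : Type*) {E : Type*} [Fintype G] [SMul G E] (T : E → ℝ) (x : E) :
    ℝ :=
  #{g : G | T x ≤ T (g • x)} / Fintype.card G

section permPValue

variable {G E : Type*} [Group G] [Fintype G] [MulAction G E]

theorem permPValue_smul (T : E → ℝ) (g : G) (x : E) :
    permPValue G T (g • x) = #{h : G | T (g • x) ≤ T (h • x)} / Fintype.card G := by
  unfold permPValue
  congr 2
  exact card_equiv (Equiv.mulRight g) fun h => by simp [mul_smul]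

theorem card_filter_permPValue_smul_le (T : E → ℝ) (x : E) {t : ℝ} (ht : 0 ≤ t) :
    (#{g : G | permPValue G T (g • x) ≤ t} : ℝ) ≤ t * Fintype.card G := by
  have hG : (0 : ℝ) < Fintype.card G := by exact_mod_cast Fintype.card_pos
  simp_rw [permPValue_smul, div_le_iff₀ hG]
  exact card_filter_card_filter_le_le (fun g : G => T (g • x)) (by positivity)

theorem measurable_permPValue [MeasurableSpace E] [MeasurableConstSMul G E] {T : E → ℝ}
    (hT : Measurable T) : Measurable (permPValue G T) := by
  unfold permPValue
  simp_rw [natCast_card_filter]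
  refine Measurable.div_const (Finset.measurable_sum _ fun g _ => ?_) _
  exact Measurable.ite (measurableSet_le hT (hT.comp (measurable_const_smul g)))
    measurable_const measurable_const

theorem measure_permPValue_le [MeasurableSpace E] [MeasurableConstSMul G E] (ν : Measure E)
    [SMulInvariantMeasure G E ν] {T : E → ℝ} (hT : Measurable T) {t : ℝ} (ht : 0 ≤ t) :
    ν {x | permPValue G T x ≤ t} ≤ ENNReal.ofReal t * ν Set.univ := by
  set A := {x | permPValue G T x ≤ t}
  have hA : MeasurableSet A := measurable_permPValue hT measurableSet_Iic
  have hcount (x : E) : (#{g ∈ (univ : Finset G) | x ∈ (g • ·) ⁻¹' A} : ℝ≥0∞) ≤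
      ENNReal.ofReal t * Fintype.card G := by
    rw [← ENNReal.ofReal_natCast, ← ENNReal.ofReal_natCast, ← ENNReal.ofReal_mul ht]
    exact ENNReal.ofReal_le_ofReal (card_filter_permPValue_smul_le T x ht)
  have hsum : Fintype.card G * ν A ≤ Fintype.card G * (ENNReal.ofReal t * ν Set.univ) := by
    calc Fintype.card G * ν A = ∑ g : G, ν ((g • ·) ⁻¹' A) := by
          simp [measure_preimage_smul]
      _ ≤ ENNReal.ofReal t * Fintype.card G * ν Set.univ :=
          sum_measure_le_of_forall_card_le _
            (fun g _ => (measurable_const_smul g hA).nullMeasurableSet) hcount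
      _ = Fintype.card G * (ENNReal.ofReal t * ν Set.univ) := by ring
  exact (ENNReal.mul_le_mul_iff_right (by simp) (by simp)).mp hsum

end permPValue

/-- Validity (superuniformity) of the permutation p-value: if the law of the data X
is invariant under the action of a finite group G and
p(x) = |{g : T(g•x) ≥ T(x)}| / |G|, then P(p(X) ≤ t) ≤ t for all t ∈ [0,1]. -/
theorem permutation_pvalue_superuniform
    {Ω E : Type*} [MeasurableSpace Ω] [MeasurableSpace E]
    (μ : Measure Ω) [IsProbabilityMeasure μ]
    (G : Type*) [Group G] [Fintype G] [MulAction G E]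
    (hmeas : ∀ g : G, Measurable (fun x : E => g • x))
    (X : Ω → E) (hX : Measurable X)
    (hinv : ∀ g : G, Measure.map (fun ω => g • X ω) μ = Measure.map X μ)
    (T : E → ℝ) (hTmeas : Measurable T) :
    ∀ t ∈ Set.Icc (0 : ℝ) 1,
      μ {ω | ((Finset.univ.filter (fun g : G => T (X ω) ≤ T (g • X ω))).card : ℝ) /
          (Fintype.card G : ℝ) ≤ t} ≤ ENNReal.ofReal t := by
  rintro t ⟨ht, -⟩
  have : MeasurableConstSMul G E := ⟨hmeas⟩
  have : IsProbabilityMeasure (μ.map X) := Measure.isProbabilityMeasure_map hX.aemeasurable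
  have : SMulInvariantMeasure G E (μ.map X) := ⟨fun g s hs => by
    rw [← Measure.map_apply (hmeas g) hs, Measure.map_map (hmeas g) hX]
    exact congrArg (· s) (hinv g)⟩
  have hA : MeasurableSet {x | permPValue G T x ≤ t} :=
    measurable_permPValue hTmeas measurableSet_Iic
  calc μ {ω | permPValue G T (X ω) ≤ t} = μ.map X {x | permPValue G T x ≤ t} :=
        (Measure.map_apply hX hA).symm
    _ ≤ ENNReal.ofReal t := by
        simpa using measure_permPValue_le (G := G) (μ.map X) hTmeas ht
end

section
/- Strong FWER control of the Holm procedure: if the p-values of true null hypotheses are superuniform (P(p_i ≤ t) ≤ t for all t), then the Holm step-down procedure at level α makes at least one false rejection with probability at most α, for any configuration of m₀ true nulls among m hypotheses. -/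
/-!
If the step-down procedure rejects some true null, look at the first true null in the order
`σ`, at position `j₀`. It is rejected too, and all `m₀` true nulls sit at positions `≥ j₀`, so
`m₀ ≤ m - j₀` and its p-value is at most `α / (m - j₀) ≤ α / m₀`. Hence a false rejection forces
`min_{i ∈ I₀} p i ≤ α / m₀`, an event of probability at most `m₀ · α / m₀ = α` by Bonferroni.
-/

open MeasureTheory

theorem Equiv.Perm.exists_le_mem_card_le_sub {m : ℕ} (σ : Equiv.Perm (Fin m))
    {I : Finset (Fin m)} {j : Fin m} (hj : σ j ∈ I) :
    ∃ j₀ ≤ j, σ j₀ ∈ I ∧ I.card ≤ m - (j₀ : ℕ) := by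
  set S := I.map σ.symm.toEmbedding
  have hjS : j ∈ S := Finset.mem_map_equiv.2 (by simpa using hj)
  refine ⟨S.min' ⟨j, hjS⟩, S.min'_le j hjS, ?_, ?_⟩
  · simpa [S] using S.min'_mem ⟨j, hjS⟩
  · calc I.card = S.card := (Finset.card_map _).symm
      _ ≤ (Finset.Ici (S.min' ⟨j, hjS⟩)).card :=
        Finset.card_le_card fun k hk => Finset.mem_Ici.2 (S.min'_le k hk)
      _ = m - _ := Fin.card_Ici _

theorem exists_mem_le_div_card_of_stepDown {m : ℕ} (q : Fin m → ℝ) (σ : Equiv.Perm (Fin m))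
    {I : Finset (Fin m)} {α : ℝ} (hα : 0 ≤ α) {j : Fin m} (hj : σ j ∈ I)
    (hrej : ∀ j' ≤ j, q (σ j') ≤ α / ((m : ℝ) - (j' : ℕ))) :
    ∃ i ∈ I, q i ≤ α / I.card := by
  obtain ⟨j₀, hj₀j, hj₀I, hcard⟩ := σ.exists_le_mem_card_le_sub hj
  have hcard' : (I.card : ℝ) ≤ m - (j₀ : ℕ) := by
    rw [← Nat.cast_sub j₀.isLt.le]
    exact_mod_cast hcard
  have hpos : (0 : ℝ) < I.card := by exact_mod_cast Finset.card_pos.2 ⟨_, hj₀I⟩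
  exact ⟨σ j₀, hj₀I, (hrej j₀ hj₀j).trans (div_le_div_of_nonneg_left hα hpos hcard')⟩

theorem measure_exists_mem_le_le_card_mul {Ω ι : Type*} [MeasurableSpace Ω] (μ : Measure Ω)
    (p : ι → Ω → ℝ) (I : Finset ι) (t : ℝ) {ε : ENNReal}
    (h : ∀ i ∈ I, μ {ω | p i ω ≤ t} ≤ ε) :
    μ {ω | ∃ i ∈ I, p i ω ≤ t} ≤ I.card * ε := by
  calc μ {ω | ∃ i ∈ I, p i ω ≤ t} = μ (⋃ i ∈ I, {ω | p i ω ≤ t}) := by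
        congr 1; ext ω; simp
    _ ≤ ∑ i ∈ I, μ {ω | p i ω ≤ t} := measure_biUnion_finset_le I _
    _ ≤ I.card • ε := Finset.sum_le_card_nsmul I _ ε h
    _ = I.card * ε := nsmul_eq_mul _ _

theorem holm_strong_fwer_control_general
    {Ω : Type*} [MeasurableSpace Ω] (μ : Measure Ω) [IsProbabilityMeasure μ]
    {m : ℕ} (p : Fin m → Ω → ℝ)
    (I₀ : Finset (Fin m))
    (α : ℝ) (hα₀ : 0 ≤ α) (hα₁ : α ≤ 1)
    (hsuper : ∀ i ∈ I₀, ∀ t ∈ Set.Icc (0 : ℝ) 1,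
      μ {ω | p i ω ≤ t} ≤ ENNReal.ofReal t)
    (σ : Ω → Equiv.Perm (Fin m)) :
    μ {ω | ∃ i ∈ I₀, ∃ j : Fin m, σ ω j = i ∧
        ∀ j' : Fin m, j' ≤ j → p (σ ω j') ω ≤ α / ((m : ℝ) - (j' : ℕ))} ≤
      ENNReal.ofReal α := by
  rcases I₀.eq_empty_or_nonempty with rfl | hI₀
  · simp
  have hcard : (1 : ℝ) ≤ I₀.card := by exact_mod_cast hI₀.card_pos
  have ht : α / I₀.card ∈ Set.Icc (0 : ℝ) 1 :=
    ⟨by positivity, div_le_one_of_le₀ (hα₁.trans hcard) (by positivity)⟩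
  calc _ ≤ μ {ω | ∃ i ∈ I₀, p i ω ≤ α / I₀.card} :=
        measure_mono <| by
          rintro ω ⟨_, hi, _, rfl, hrej⟩
          exact exists_mem_le_div_card_of_stepDown (p · ω) (σ ω) hα₀ hi hrej
    _ ≤ I₀.card * ENNReal.ofReal (α / I₀.card) :=
        measure_exists_mem_le_le_card_mul μ p I₀ _ fun i hi => hsuper i hi _ ht
    _ = ENNReal.ofReal α := by
        rw [← ENNReal.ofReal_natCast, ← ENNReal.ofReal_mul (by positivity),
          mul_div_cancel₀ _ (by positivity)]

/-- Strong FWER control of the Holm step-down procedure: with superuniform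
p-values for the true nulls I₀ and the p-values sorted increasingly for each
outcome ω by a permutation σ(ω), Holm rejects hypothesis i iff i = σ(ω) j for
some j with p(σ(ω) j') ≤ α/(m − j') for all j' ≤ j (0-based indexing). The
probability of at least one false rejection is at most α, for any configuration
of true nulls. -/
theorem holm_strong_fwer_control
    {Ω : Type*} [MeasurableSpace Ω] (μ : Measure Ω) [IsProbabilityMeasure μ]
    {m : ℕ} (hm : 0 < m) (p : Fin m → Ω → ℝ)
    (I₀ : Finset (Fin m)) (hI₀ : I₀.Nonempty)
    (α : ℝ) (hα₀ : 0 ≤ α) (hα₁ : α ≤ 1)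
    (hsuper : ∀ i ∈ I₀, ∀ t ∈ Set.Icc (0 : ℝ) 1,
      μ {ω | p i ω ≤ t} ≤ ENNReal.ofReal t)
    (σ : Ω → Equiv.Perm (Fin m))
    (hσ : ∀ ω, Monotone fun j : Fin m => p (σ ω j) ω) :
    μ {ω | ∃ i ∈ I₀, ∃ j : Fin m, σ ω j = i ∧
        ∀ j' : Fin m, j' ≤ j → p (σ ω j') ω ≤ α / ((m : ℝ) - (j' : ℕ))} ≤
      ENNReal.ofReal α :=
  holm_strong_fwer_control_general μ p I₀ α hα₀ hα₁ hsuper σ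
end
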